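/- Let ψ ∈ H ⊗ H and ψ̃ ∈ H̃ ⊗ H̃ be maximally entangled states with dim H ≤ dim H̃, and let ε ≥ 0. Suppose there exist isometries V_A : H → H̃ ⊗ K_A and V_B : H → H̃ ⊗ K_B and a unit vector aux ∈ K_A ⊗ K_B such that ‖(V_A ⊗ V_B)ψ − ψ̃ ⊗ aux‖ ≤ ε. Then dim H ≥ (1 − ε²)·dim H̃. -/

import Mathlib

open scoped BigOperators Kronecker ComplexOrder
open Matrix

noncomputable section

abbrev Op (n : ℕ) := Matrix (Fin n) (Fin n) ℂ

def inn {I : Type*} [Fintype I] (v w : I → ℂ) : ℂ := ∑ i, star (v i) * w i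

def nrm {I : Type*} [Fintype I] (v : I → ℂ) : ℝ := Real.sqrt (inn v v).re

def IsPOVM {n m : ℕ} (A : Fin m → Op n) : Prop :=
  (∀ a, (A a).PosSemidef) ∧ (∑ a, A a) = 1

def IsPVM {n m : ℕ} (A : Fin m → Op n) : Prop :=
  (∀ a, (A a).IsHermitian ∧ A a * A a = A a) ∧ (∑ a, A a) = 1

structure Game (q m : ℕ) where
  nu : Fin q → Fin q → ℝ
  nu_nonneg : ∀ x y, 0 ≤ nu x y
  nu_sum : (∑ x, ∑ y, nu x y) = 1
  D : Fin m → Fin m → Fin q → Fin q → Bool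

structure Strategy (q m nA nB : ℕ) where
  psi : Fin nA × Fin nB → ℂ
  psi_unit : inn psi psi = 1
  A : Fin q → Fin m → Op nA
  B : Fin q → Fin m → Op nB
  A_povm : ∀ x, IsPOVM (A x)
  B_povm : ∀ y, IsPOVM (B y)

def corrRaw {q m nA nB : ℕ} (psi : Fin nA × Fin nB → ℂ)
    (A : Fin q → Fin m → Op nA) (B : Fin q → Fin m → Op nB)
    (x y : Fin q) (a b : Fin m) : ℂ :=
  inn psi ((A x a ⊗ₖ B y b).mulVec psi)

def Strategy.corr {q m nA nB : ℕ} (S : Strategy q m nA nB) :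
    Fin q → Fin q → Fin m → Fin m → ℂ :=
  corrRaw S.psi S.A S.B

def winProbRaw {q m nA nB : ℕ} (G : Game q m) (psi : Fin nA × Fin nB → ℂ)
    (A : Fin q → Fin m → Op nA) (B : Fin q → Fin m → Op nB) : ℝ :=
  ∑ x, ∑ y, G.nu x y *
    ∑ a, ∑ b, (if G.D a b x y then (1:ℝ) else 0) * (corrRaw psi A B x y a b).re

def winProb {q m nA nB : ℕ} (G : Game q m) (S : Strategy q m nA nB) : ℝ :=
  winProbRaw G S.psi S.A S.B

def qval {q m : ℕ} (G : Game q m) : ℝ :=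
  sSup {w : ℝ | ∃ (nA nB : ℕ) (S : Strategy q m nA nB), winProb G S = w}

def margA {q : ℕ} (nu : Fin q → Fin q → ℝ) (x : Fin q) : ℝ := ∑ y, nu x y
def margB {q : ℕ} (nu : Fin q → Fin q → ℝ) (y : Fin q) : ℝ := ∑ x, nu x y

def dsyncRaw {q m nA nB : ℕ} (psi : Fin nA × Fin nB → ℂ)
    (A : Fin q → Fin m → Op nA) (B : Fin q → Fin m → Op nB) (mu : Fin q → ℝ) : ℝ :=
  1 - ∑ x, mu x * ∑ a, (corrRaw psi A B x x a a).re

def Strategy.dsync {q m nA nB : ℕ} (S : Strategy q m nA nB) (mu : Fin q → ℝ) : ℝ :=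
  dsyncRaw S.psi S.A S.B mu

def Game.Symm {q m : ℕ} (G : Game q m) : Prop :=
  (∀ x y, G.nu x y = G.nu y x) ∧ ∀ a b x y, G.D a b x y = G.D b a y x

def Game.Synchronous {q m : ℕ} (G : Game q m) : Prop :=
  G.Symm ∧ (∀ x, 0 < G.nu x x) ∧ ∀ x a b, a ≠ b → G.D a b x x = false

def Game.BetaSync {q m : ℕ} (G : Game q m) (β : ℝ) : Prop :=
  G.Synchronous ∧ ∀ x, β * ∑ y, G.nu x y ≤ G.nu x x

def Game.Perfect {q m : ℕ} (G : Game q m) : Prop :=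
  ∃ (nA nB : ℕ) (S : Strategy q m nA nB), winProb G S = 1

def IsPME {q m n : ℕ} (S : Strategy q m n n) : Prop :=
  (∀ x, IsPVM (S.A x)) ∧
  ∃ U : Op n, Uᴴ * U = 1 ∧
    (∀ p, S.psi p = ((Real.sqrt n)⁻¹ : ℂ) * ∑ i, U p.1 i * U p.2 i) ∧
    (∀ x a, S.B x a = U * (Uᴴ * S.A x a * U)ᵀ * Uᴴ)

def dilTarget {nA nB kA kB : ℕ} (psi : Fin nA × Fin nB → ℂ)
    (aux : Fin kA × Fin kB → ℂ) :
    (Fin nA × Fin kA) × (Fin nB × Fin kB) → ℂ :=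
  fun p => psi (p.1.1, p.2.1) * aux (p.1.2, p.2.2)

def DilIneqs {q m nA nB tA tB kA kB : ℕ}
    (S : Strategy q m nA nB) (T : Strategy q m tA tB)
    (VA : Matrix (Fin tA × Fin kA) (Fin nA) ℂ)
    (VB : Matrix (Fin tB × Fin kB) (Fin nB) ℂ)
    (aux : Fin kA × Fin kB → ℂ) (ε : ℝ) (mu : Fin q → Fin q → ℝ) : Prop :=
  nrm (fun p => (VA ⊗ₖ VB).mulVec S.psi p - dilTarget T.psi aux p) ≤ ε ∧
  Real.sqrt (∑ x, margA mu x * ∑ a,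
    (nrm (fun p => (VA ⊗ₖ VB).mulVec ((S.A x a ⊗ₖ (1 : Op nB)).mulVec S.psi) p
      - dilTarget ((T.A x a ⊗ₖ (1 : Op tB)).mulVec T.psi) aux p)) ^ 2) ≤ ε ∧
  Real.sqrt (∑ y, margB mu y * ∑ b,
    (nrm (fun p => (VA ⊗ₖ VB).mulVec (((1 : Op nA) ⊗ₖ S.B y b).mulVec S.psi) p
      - dilTarget (((1 : Op tA) ⊗ₖ T.B y b).mulVec T.psi) aux p)) ^ 2) ≤ ε

def LocalDilation {q m nA nB tA tB : ℕ}
    (S : Strategy q m nA nB) (T : Strategy q m tA tB) (ε : ℝ)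
    (mu : Fin q → Fin q → ℝ) : Prop :=
  ∃ (kA kB : ℕ) (VA : Matrix (Fin tA × Fin kA) (Fin nA) ℂ)
    (VB : Matrix (Fin tB × Fin kB) (Fin nB) ℂ) (aux : Fin kA × Fin kB → ℂ),
    VAᴴ * VA = 1 ∧ VBᴴ * VB = 1 ∧ inn aux aux = 1 ∧ DilIneqs S T VA VB aux ε mu

def SelfTestsPME {q m tA tB : ℕ} (G : Game q m) (T : Strategy q m tA tB)
    (κ : ℝ → ℝ) (nuh : Fin q → Fin q → ℝ) : Prop :=
  ∀ ε : ℝ, 0 ≤ ε → ∀ (n : ℕ) (S : Strategy q m n n), IsPME S →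
    qval G - ε ≤ winProb G S → LocalDilation S T (κ ε) nuh

def SelfTestsAll {q m tA tB : ℕ} (G : Game q m) (T : Strategy q m tA tB)
    (κ : ℝ → ℝ) (nuh : Fin q → Fin q → ℝ) : Prop :=
  ∀ ε : ℝ, 0 ≤ ε → ∀ (nA nB : ℕ) (S : Strategy q m nA nB),
    qval G - ε ≤ winProb G S → LocalDilation S T (κ ε) nuh

def SelfTestsClass {q m tA tB : ℕ} (G : Game q m) (T : Strategy q m tA tB)
    (κ : ℝ → ℝ) (nuh : Fin q → Fin q → ℝ)
    (Cl : ∀ nA nB : ℕ, Strategy q m nA nB → Prop) : Prop :=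
  ∀ ε : ℝ, 0 ≤ ε → ∀ (nA nB : ℕ) (S : Strategy q m nA nB), Cl nA nB S →
    qval G - ε ≤ winProb G S → LocalDilation S T (κ ε) nuh

def gamePoly {q m nA nB : ℕ} (G : Game q m) (S : Strategy q m nA nB) :
    Matrix (Fin nA × Fin nB) (Fin nA × Fin nB) ℂ :=
  ∑ x, ∑ y, ∑ a, ∑ b,
    (((G.nu x y : ℝ) : ℂ) * (if G.D a b x y then 1 else 0)) • (S.A x a ⊗ₖ S.B y b)

def specGap {I : Type*} [Fintype I] [DecidableEq I] (M : Matrix I I ℂ) : ℝ :=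
  if h : M.IsHermitian then
    (((Finset.univ.val.map h.eigenvalues).sort (· ≤ ·)).getD (Fintype.card I - 1) 0) -
    (((Finset.univ.val.map h.eigenvalues).sort (· ≤ ·)).getD (Fintype.card I - 2) 0)
  else 0

def rhoA {nA nB : ℕ} (psi : Fin nA × Fin nB → ℂ) : Op nA :=
  Matrix.of fun i j => ∑ k, psi (i, k) * star (psi (j, k))

def rhoB {nA nB : ℕ} (psi : Fin nA × Fin nB → ℂ) : Op nB :=
  Matrix.of fun i j => ∑ k, psi (k, i) * star (psi (k, j))

def IsMaxEntG {I J : Type*} [Fintype I] [DecidableEq I] [Fintype J] (psi : I × J → ℂ) : Prop :=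
  Fintype.card I = Fintype.card J ∧
  ∃ (e : I → I → ℂ) (f : I → J → ℂ),
    (∀ i j, inn (e i) (e j) = if i = j then 1 else 0) ∧
    (∀ i j, inn (f i) (f j) = if i = j then 1 else 0) ∧
    ∀ p, psi p = ((Real.sqrt (Fintype.card I))⁻¹ : ℂ) * ∑ i, e i p.1 * f i p.2

def IsMaxEntIn {kA kB : ℕ} (v : Fin kA × Fin kB → ℂ) : Prop :=
  ∃ (d : ℕ), 0 < d ∧ ∃ (e : Fin d → Fin kA → ℂ) (f : Fin d → Fin kB → ℂ),
    (∀ i j, inn (e i) (e j) = if i = j then 1 else 0) ∧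
    (∀ i j, inn (f i) (f j) = if i = j then 1 else 0) ∧
    ∀ p, v p = ((Real.sqrt d)⁻¹ : ℂ) * ∑ i, e i p.1 * f i p.2

def hsNorm {n : ℕ} (M : Op n) : ℝ := Real.sqrt (Mᴴ * M).trace.re

def traceNorm {n : ℕ} (M : Op n) : ℝ :=
  ((Matrix.posSemidef_conjTranspose_mul_self M).1.eigenvectorUnitary.1 *
    diagonal (((↑) : ℝ → ℂ) ∘ (√·) ∘ (Matrix.posSemidef_conjTranspose_mul_self M).1.eigenvalues) *
    (star (Matrix.posSemidef_conjTranspose_mul_self M).1.eigenvectorUnitary : Op n)).trace.re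

/-! Write `φ = (V_A ⊗ V_B) ψ` and `η = ψ̃ ⊗ aux`. Both are unit vectors, so
`1 - ‖φ - η‖² ≤ |⟨η, φ⟩|²`. Since `ψ = n^{-1/2} ∑ᵢ eᵢ ⊗ fᵢ`, the vector `φ` is `n^{-1/2}` times
a sum of `n` products `uᵢ ⊗ vᵢ` of unit vectors. The overlap of `η` with any product of unit
vectors is at most `tn^{-1/2}`: this is the largest Schmidt coefficient of `ψ̃`, and tensoring with
the unit vector `aux` cannot increase it. Hence `|⟨η, φ⟩|² ≤ n / tn`. -/

open scoped InnerProductSpace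

section InnerProduct

variable {I J : Type*} [Fintype I] [Fintype J]

lemma inn_eq_inner (v w : I → ℂ) :
    inn v w = ⟪(WithLp.toLp 2 v : EuclideanSpace ℂ I), WithLp.toLp 2 w⟫_ℂ := by
  simp [inn, PiLp.inner_apply, mul_comm]

lemma nrm_eq_norm (v : I → ℂ) : nrm v = ‖(WithLp.toLp 2 v : EuclideanSpace ℂ I)‖ := by
  rw [nrm, inn_eq_inner, ← RCLike.re_to_complex, inner_self_eq_norm_sq,
    Real.sqrt_sq (norm_nonneg _)]

lemma nrm_sq (v : I → ℂ) : nrm v ^ 2 = ∑ i, ‖v i‖ ^ 2 := by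
  rw [nrm_eq_norm, EuclideanSpace.norm_eq, Real.sq_sqrt (by positivity)]

lemma nrm_nonneg (v : I → ℂ) : 0 ≤ nrm v := Real.sqrt_nonneg _

lemma nrm_eq_one_of_inn_self {v : I → ℂ} (hv : inn v v = 1) : nrm v = 1 := by
  simp [nrm, hv]

lemma inn_self_eq (v : I → ℂ) : inn v v = ((nrm v ^ 2 : ℝ) : ℂ) := by
  rw [inn_eq_inner, nrm_eq_norm, inner_self_eq_norm_sq_to_K]
  push_cast; rfl

lemma norm_inn_le (v w : I → ℂ) : ‖inn v w‖ ≤ nrm v * nrm w := by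
  rw [inn_eq_inner, nrm_eq_norm, nrm_eq_norm]
  exact norm_inner_le_norm _ _

lemma nrm_neg (v : I → ℂ) : nrm (fun i => -v i) = nrm v := by
  simp [nrm, inn]

lemma nrm_comp_equiv (v : I → ℂ) (σ : J ≃ I) : nrm (v ∘ σ) = nrm v := by
  simp only [nrm, inn, Function.comp_apply, Equiv.sum_comp σ fun i => star (v i) * v i]

lemma inn_smul_left (c : ℂ) (v w : I → ℂ) : inn (c • v) w = star c * inn v w := by
  simp only [inn, Pi.smul_apply, smul_eq_mul, star_mul', Finset.mul_sum]
  exact Finset.sum_congr rfl fun _ _ => by ring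

lemma inn_sum_left {ι : Type*} (s : Finset ι) (v : ι → I → ℂ) (w : I → ℂ) :
    inn (∑ k ∈ s, v k) w = ∑ k ∈ s, inn (v k) w := by
  simp only [inn, Finset.sum_apply, star_sum, Finset.sum_mul]
  exact Finset.sum_comm

lemma inn_smul_right (c : ℂ) (v w : I → ℂ) : inn v (c • w) = c * inn v w := by
  simp only [inn, Pi.smul_apply, smul_eq_mul, Finset.mul_sum]
  exact Finset.sum_congr rfl fun _ _ => by ring

lemma inn_sum_right {ι : Type*} (s : Finset ι) (v : I → ℂ) (w : ι → I → ℂ) :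
    inn v (∑ k ∈ s, w k) = ∑ k ∈ s, inn v (w k) := by
  simp only [inn, Finset.sum_apply, Finset.mul_sum]
  exact Finset.sum_comm

lemma sqrt_sum_norm_inn_sq_le {ι : Type*} [Fintype ι] [DecidableEq ι] {e : ι → I → ℂ}
    (he : ∀ i j, inn (e i) (e j) = if i = j then 1 else 0) (v : I → ℂ) :
    √(∑ k, ‖inn (e k) v‖ ^ 2) ≤ nrm v := by
  have hON : Orthonormal ℂ fun k => (WithLp.toLp 2 (e k) : EuclideanSpace ℂ I) := by
    rw [orthonormal_iff_ite]
    exact fun i j => (inn_eq_inner _ _).symm.trans (he i j)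
  rw [Real.sqrt_le_left (nrm_nonneg v)]
  simpa only [inn_eq_inner, nrm_eq_norm] using
    hON.sum_inner_products_le (𝕜 := ℂ) (WithLp.toLp 2 v : EuclideanSpace ℂ I) (s := .univ)

lemma sum_nrm_sq_slice (u : I × J → ℂ) :
    ∑ k, nrm (fun i => u (i, k)) ^ 2 = nrm u ^ 2 := by
  simp only [nrm_sq, Fintype.sum_prod_type_right (f := fun p => ‖u p‖ ^ 2)]

lemma one_sub_nrm_sub_sq_le {v w : I → ℂ} (hv : nrm v = 1) (hw : nrm w = 1) :
    1 - nrm (fun i => v i - w i) ^ 2 ≤ ‖inn w v‖ ^ 2 := by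
  have hsub : nrm (fun i => v i - w i) ^ 2 = 2 - 2 * (inn w v).re := by
    rw [nrm_eq_norm, show (WithLp.toLp 2 fun i => v i - w i : EuclideanSpace ℂ I)
      = WithLp.toLp 2 v - WithLp.toLp 2 w from rfl, norm_sub_sq (𝕜 := ℂ), ← nrm_eq_norm,
      ← nrm_eq_norm, hv, hw, inner_re_symm, ← inn_eq_inner, RCLike.re_to_complex]
    ring
  have hre : (inn w v).re ^ 2 ≤ ‖inn w v‖ ^ 2 := by
    rw [sq_le_sq, abs_norm]; exact Complex.abs_re_le_norm _
  nlinarith [sq_nonneg (1 - (inn w v).re)]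

end InnerProduct

section Kronecker

variable {I J I' J' : Type*} [Fintype I] [Fintype J]

def kronVec (x : I → ℂ) (y : J → ℂ) : I × J → ℂ := fun p => x p.1 * y p.2

lemma inn_kronVec (x x' : I → ℂ) (y y' : J → ℂ) :
    inn (kronVec x y) (kronVec x' y') = inn x x' * inn y y' := by
  simp only [inn, kronVec, Fintype.sum_prod_type, Finset.sum_mul_sum, star_mul']
  exact Finset.sum_congr rfl fun _ _ => Finset.sum_congr rfl fun _ _ => by ring

lemma nrm_kronVec (x : I → ℂ) (y : J → ℂ) : nrm (kronVec x y) = nrm x * nrm y := by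
  rw [nrm, inn_kronVec, inn_self_eq, inn_self_eq, ← Complex.ofReal_mul, Complex.ofReal_re,
    ← mul_pow, Real.sqrt_sq (mul_nonneg (nrm_nonneg x) (nrm_nonneg y))]

lemma kronecker_mulVec_kronVec (A : Matrix I' I ℂ) (B : Matrix J' J ℂ) (x : I → ℂ)
    (y : J → ℂ) :
    (A ⊗ₖ B) *ᵥ kronVec x y = kronVec (A *ᵥ x) (B *ᵥ y) := by
  ext p
  simp only [mulVec, dotProduct, kronVec, kroneckerMap_apply, Fintype.sum_prod_type,
    Finset.sum_mul_sum]
  exact Finset.sum_congr rfl fun _ _ => Finset.sum_congr rfl fun _ _ => by ring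

lemma inn_mulVec_mulVec [Fintype I'] [DecidableEq I] {A : Matrix I' I ℂ} (hA : Aᴴ * A = 1)
    (x y : I → ℂ) :
    inn (A *ᵥ x) (A *ᵥ y) = inn x y := by
  change star (A *ᵥ x) ⬝ᵥ A *ᵥ y = star x ⬝ᵥ y
  rw [star_mulVec, dotProduct_mulVec, vecMul_vecMul, hA, vecMul_one]

lemma nrm_mulVec [Fintype I'] [DecidableEq I] {A : Matrix I' I ℂ} (hA : Aᴴ * A = 1)
    (x : I → ℂ) :
    nrm (A *ᵥ x) = nrm x := by
  rw [nrm, nrm, inn_mulVec_mulVec hA]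

omit [Fintype I] [Fintype J] in
lemma conjTranspose_kronecker_mul_self [Fintype I'] [Fintype J'] [DecidableEq I] [DecidableEq J]
    {A : Matrix I' I ℂ} {B : Matrix J' J ℂ} (hA : Aᴴ * A = 1) (hB : Bᴴ * B = 1) :
    (A ⊗ₖ B)ᴴ * (A ⊗ₖ B) = 1 := by
  rw [conjTranspose_kronecker, ← mul_kronecker_mul, hA, hB, one_kronecker_one]

end Kronecker

section Overlap

variable {I J : Type*} [Fintype I] [Fintype J]

lemma norm_inn_smul_sum_kronVec_le {ι : Type*} [Fintype ι] [DecidableEq ι]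
    {e : ι → I → ℂ} {f : ι → J → ℂ}
    (he : ∀ i j, inn (e i) (e j) = if i = j then 1 else 0)
    (hf : ∀ i j, inn (f i) (f j) = if i = j then 1 else 0) (c : ℂ) (y : I → ℂ)
    (z : J → ℂ) :
    ‖inn (c • ∑ i, kronVec (e i) (f i)) (kronVec y z)‖ ≤ ‖c‖ * nrm y * nrm z := by
  calc ‖inn (c • ∑ i, kronVec (e i) (f i)) (kronVec y z)‖
      = ‖c‖ * ‖∑ i, inn (e i) y * inn (f i) z‖ := by
        simp only [inn_smul_left, inn_sum_left, inn_kronVec, norm_mul, norm_star]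
    _ ≤ ‖c‖ * ∑ i, ‖inn (e i) y‖ * ‖inn (f i) z‖ := by
        gcongr
        exact (norm_sum_le _ _).trans_eq (by simp only [norm_mul])
    _ ≤ ‖c‖ * (√(∑ i, ‖inn (e i) y‖ ^ 2) * √(∑ i, ‖inn (f i) z‖ ^ 2)) := by
        gcongr
        exact Real.sum_mul_le_sqrt_mul_sqrt _ _ _
    _ ≤ ‖c‖ * (nrm y * nrm z) :=
        mul_le_mul_of_nonneg_left (mul_le_mul (sqrt_sum_norm_inn_sq_le he y)
          (sqrt_sum_norm_inn_sq_le hf z) (Real.sqrt_nonneg _) (nrm_nonneg y)) (norm_nonneg c)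
    _ = ‖c‖ * nrm y * nrm z := by ring

lemma nrm_smul_sum_kronVec {ι : Type*} [Fintype ι] [DecidableEq ι]
    {e : ι → I → ℂ} {f : ι → J → ℂ}
    (he : ∀ i j, inn (e i) (e j) = if i = j then 1 else 0)
    (hf : ∀ i j, inn (f i) (f j) = if i = j then 1 else 0) (c : ℂ) :
    nrm (c • ∑ i, kronVec (e i) (f i)) = ‖c‖ * √(Fintype.card ι) := by
  have h : inn (c • ∑ i, kronVec (e i) (f i)) (c • ∑ i, kronVec (e i) (f i))
      = ((‖c‖ ^ 2 * Fintype.card ι : ℝ) : ℂ) := by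
    simp only [inn_smul_left, inn_smul_right, inn_sum_left, inn_sum_right, inn_kronVec, he, hf,
      ite_mul, one_mul, zero_mul, Finset.sum_ite_eq', Finset.mem_univ, if_true, Finset.sum_const,
      Finset.card_univ, nsmul_eq_mul, mul_one]
    rw [mul_left_comm, Complex.star_def, Complex.mul_conj']
    push_cast; ring
  rw [nrm, h, Complex.ofReal_re, Real.sqrt_mul (sq_nonneg _), Real.sqrt_sq (norm_nonneg _)]

end Overlap

section Dilation

variable {a b kA kB : ℕ}

lemma nrm_dilTarget (x : Fin a × Fin b → ℂ) (y : Fin kA × Fin kB → ℂ) :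
    nrm (dilTarget x y) = nrm x * nrm y := by
  rw [show dilTarget x y = kronVec x y ∘ Equiv.prodProdProdComm _ _ _ _ from rfl,
    nrm_comp_equiv, nrm_kronVec]

lemma inn_dilTarget_kronVec (x : Fin a × Fin b → ℂ) (y : Fin kA × Fin kB → ℂ)
    (u : Fin a × Fin kA → ℂ) (v : Fin b × Fin kB → ℂ) :
    inn (dilTarget x y) (kronVec u v)
      = inn y fun q => inn x (kronVec (fun i => u (i, q.1)) (fun j => v (j, q.2))) := by
  simp only [inn, dilTarget, kronVec, Fintype.sum_prod_type, star_mul', Finset.mul_sum]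
  rw [Finset.sum_comm]
  refine Finset.sum_congr rfl fun _ _ => ?_
  conv_rhs => rw [Finset.sum_comm]
  refine Finset.sum_congr rfl fun _ _ => ?_
  rw [Finset.sum_comm]
  exact Finset.sum_congr rfl fun _ _ => Finset.sum_congr rfl fun _ _ => by ring

lemma norm_inn_dilTarget_kronVec_le {x : Fin a × Fin b → ℂ} {C : ℝ} (hC : 0 ≤ C)
    (hx : ∀ y z, ‖inn x (kronVec y z)‖ ≤ C * nrm y * nrm z) (aux : Fin kA × Fin kB → ℂ)
    (u : Fin a × Fin kA → ℂ) (v : Fin b × Fin kB → ℂ) :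
    ‖inn (dilTarget x aux) (kronVec u v)‖ ≤ C * nrm aux * nrm u * nrm v := by
  set M : Fin kA × Fin kB → ℂ :=
    fun q => inn x (kronVec (fun i => u (i, q.1)) (fun j => v (j, q.2)))
  have hM : nrm M ≤ C * nrm u * nrm v := by
    have hbound : 0 ≤ C * nrm u * nrm v := by positivity [nrm_nonneg u, nrm_nonneg v]
    rw [← pow_le_pow_iff_left₀ (nrm_nonneg M) hbound two_ne_zero]
    calc nrm M ^ 2 = ∑ q : Fin kA × Fin kB, ‖M q‖ ^ 2 := nrm_sq M
      _ ≤ ∑ q : Fin kA × Fin kB,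
          (C * nrm (fun i => u (i, q.1)) * nrm (fun j => v (j, q.2))) ^ 2 :=
        Finset.sum_le_sum fun q _ => pow_le_pow_left₀ (norm_nonneg _) (hx _ _) 2
      _ = C ^ 2 * (∑ α, nrm (fun i => u (i, α)) ^ 2) *
          ∑ β, nrm (fun j => v (j, β)) ^ 2 := by
        rw [Fintype.sum_prod_type, mul_assoc, Finset.sum_mul_sum, Finset.mul_sum]
        simp_rw [Finset.mul_sum]
        exact Finset.sum_congr rfl fun _ _ => Finset.sum_congr rfl fun _ _ => by ring
      _ = (C * nrm u * nrm v) ^ 2 := by rw [sum_nrm_sq_slice, sum_nrm_sq_slice]; ring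
  calc ‖inn (dilTarget x aux) (kronVec u v)‖ = ‖inn aux M‖ := by rw [inn_dilTarget_kronVec]
    _ ≤ nrm aux * nrm M := norm_inn_le aux M
    _ ≤ nrm aux * (C * nrm u * nrm v) := mul_le_mul_of_nonneg_left hM (nrm_nonneg aux)
    _ = C * nrm aux * nrm u * nrm v := by ring

end Dilation

lemma norm_inv_ofReal_sqrt (x : ℝ) : ‖((√x : ℝ) : ℂ)⁻¹‖ = (√x)⁻¹ := by
  rw [norm_inv, Complex.norm_real, Real.norm_of_nonneg (Real.sqrt_nonneg _)]

namespace IsMaxEntG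

variable {I J : Type*} [Fintype I] [DecidableEq I] [Fintype J] {psi : I × J → ℂ}

lemma exists_eq_smul_sum_kronVec (h : IsMaxEntG psi) :
    ∃ (e : I → I → ℂ) (f : I → J → ℂ),
      (∀ i j, inn (e i) (e j) = if i = j then 1 else 0) ∧
      (∀ i j, inn (f i) (f j) = if i = j then 1 else 0) ∧
      psi = ((√(Fintype.card I))⁻¹ : ℂ) • ∑ i, kronVec (e i) (f i) := by
  obtain ⟨-, e, f, he, hf, hpsi⟩ := h
  refine ⟨e, f, he, hf, funext fun p => ?_⟩
  simp [hpsi p, kronVec, Finset.sum_apply]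

lemma nrm_eq_one (h : IsMaxEntG psi) (hI : 0 < Fintype.card I) : nrm psi = 1 := by
  obtain ⟨e, f, he, hf, rfl⟩ := h.exists_eq_smul_sum_kronVec
  rw [nrm_smul_sum_kronVec he hf, norm_inv_ofReal_sqrt]
  exact inv_mul_cancel₀ (by positivity)

lemma norm_inn_kronVec_le (h : IsMaxEntG psi) (y : I → ℂ) (z : J → ℂ) :
    ‖inn psi (kronVec y z)‖ ≤ (√(Fintype.card I))⁻¹ * nrm y * nrm z := by
  obtain ⟨e, f, he, hf, rfl⟩ := h.exists_eq_smul_sum_kronVec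
  simpa only [norm_inv_ofReal_sqrt] using
    norm_inn_smul_sum_kronVec_le he hf ((√(Fintype.card I))⁻¹ : ℂ) y z

lemma norm_inn_kronecker_mulVec_le {I' J' : Type*} [Fintype I'] [Fintype J'] [DecidableEq J]
    (h : IsMaxEntG psi) {A : Matrix I' I ℂ} {B : Matrix J' J ℂ} (hA : Aᴴ * A = 1)
    (hB : Bᴴ * B = 1) {η : I' × J' → ℂ} {C : ℝ}
    (hη : ∀ y z, ‖inn η (kronVec y z)‖ ≤ C * nrm y * nrm z) :
    ‖inn η ((A ⊗ₖ B) *ᵥ psi)‖ ≤ √(Fintype.card I) * C := by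
  obtain ⟨e, f, he, hf, rfl⟩ := h.exists_eq_smul_sum_kronVec
  have hunit : ∀ i, ‖inn η (kronVec (A *ᵥ e i) (B *ᵥ f i))‖ ≤ C := fun i => by
    simpa [nrm_mulVec hA, nrm_mulVec hB, nrm_eq_one_of_inn_self, he, hf] using
      hη (A *ᵥ e i) (B *ᵥ f i)
  calc _ = (√(Fintype.card I))⁻¹ *
          ‖∑ i, inn η (kronVec (A *ᵥ e i) (B *ᵥ f i))‖ := by
        simp [mulVec_smul, mulVec_sum, kronecker_mulVec_kronVec, inn_smul_right, inn_sum_right]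
    _ ≤ (√(Fintype.card I))⁻¹ * (Fintype.card I * C) := by
        gcongr
        refine (norm_sum_le _ _).trans
          ((Finset.sum_le_card_nsmul _ _ _ fun i _ => hunit i).trans_eq ?_)
        rw [Finset.card_univ, nsmul_eq_mul]
    _ = √(Fintype.card I) * C := by
        rw [← mul_assoc, inv_mul_eq_div, Real.div_sqrt]

end IsMaxEntG

theorem stmt19_general {n tn kA kB : ℕ}
    (psi : Fin n × Fin n → ℂ) (psit : Fin tn × Fin tn → ℂ)
    (hpsi : IsMaxEntG psi) (hpsit : IsMaxEntG psit)
    (VA : Matrix (Fin tn × Fin kA) (Fin n) ℂ)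
    (VB : Matrix (Fin tn × Fin kB) (Fin n) ℂ)
    (hVA : VAᴴ * VA = 1) (hVB : VBᴴ * VB = 1)
    (aux : Fin kA × Fin kB → ℂ) (haux : inn aux aux = 1)
    (ε : ℝ)
    (h : nrm (fun p => (VA ⊗ₖ VB).mulVec psi p - dilTarget psit aux p) ≤ ε) :
    (1 - ε ^ 2) * (tn : ℝ) ≤ (n : ℝ) := by
  rcases Nat.eq_zero_or_pos tn with rfl | htn
  · simp
  have hη : nrm (dilTarget psit aux) = 1 := by
    rw [nrm_dilTarget, hpsit.nrm_eq_one (by simpa using htn), nrm_eq_one_of_inn_self haux, one_mul]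
  rcases Nat.eq_zero_or_pos n with rfl | hn
  · have hφ : (VA ⊗ₖ VB) *ᵥ psi = 0 := by rw [Subsingleton.elim psi 0, mulVec_zero]
    simp only [hφ, Pi.zero_apply, zero_sub, nrm_neg, hη] at h
    have hε : 0 ≤ ε ^ 2 - 1 := by nlinarith
    push_cast
    nlinarith [mul_nonneg hε (Nat.cast_nonneg (α := ℝ) tn)]
  have hprod : ∀ y z,
      ‖inn (dilTarget psit aux) (kronVec y z)‖ ≤ (√tn)⁻¹ * nrm y * nrm z := by
    intro y z
    simpa only [nrm_eq_one_of_inn_self haux, mul_one, Fintype.card_fin] using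
      norm_inn_dilTarget_kronVec_le (by positivity) hpsit.norm_inn_kronVec_le aux y z
  have hφ : nrm ((VA ⊗ₖ VB) *ᵥ psi) = 1 := by
    rw [nrm_mulVec (conjTranspose_kronecker_mul_self hVA hVB), hpsi.nrm_eq_one (by simpa using hn)]
  have hfid := one_sub_nrm_sub_sq_le hφ hη
  have hover := hpsi.norm_inn_kronecker_mulVec_le hVA hVB hprod
  rw [Fintype.card_fin] at hover
  calc (1 - ε ^ 2) * tn
      ≤ ‖inn (dilTarget psit aux) ((VA ⊗ₖ VB) *ᵥ psi)‖ ^ 2 * tn := by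
        gcongr
        nlinarith [nrm_nonneg fun p => (VA ⊗ₖ VB).mulVec psi p - dilTarget psit aux p]
    _ ≤ (√n * (√tn)⁻¹) ^ 2 * tn := by gcongr
    _ = n := by
        rw [mul_pow, inv_pow, Real.sq_sqrt n.cast_nonneg, Real.sq_sqrt tn.cast_nonneg]
        field_simp

/-- dimension estimate for approximately locally dilated
maximally entangled states. -/
theorem stmt19 {n tn kA kB : ℕ} (hn : n ≤ tn)
    (psi : Fin n × Fin n → ℂ) (psit : Fin tn × Fin tn → ℂ)
    (hpsi : IsMaxEntG psi) (hpsit : IsMaxEntG psit)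
    (VA : Matrix (Fin tn × Fin kA) (Fin n) ℂ)
    (VB : Matrix (Fin tn × Fin kB) (Fin n) ℂ)
    (hVA : VAᴴ * VA = 1) (hVB : VBᴴ * VB = 1)
    (aux : Fin kA × Fin kB → ℂ) (haux : inn aux aux = 1)
    (ε : ℝ) (hε : 0 ≤ ε)
    (h : nrm (fun p => (VA ⊗ₖ VB).mulVec psi p - dilTarget psit aux p) ≤ ε) :
    (1 - ε ^ 2) * (tn : ℝ) ≤ (n : ℝ) :=
  stmt19_general psi psit hpsi hpsit VA VB hVA hVB aux haux ε h
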